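/- Let k, l, n be natural numbers with l ≤ n and m = k + l. Let X be an m × n integer matrix and let D be an m × n integer matrix whose first k rows are zero and whose remaining entries are D_{(k+t), t} = d_t for 0 ≤ t < l with each d_t a nonzero integer, all other entries of D being zero. Suppose U and U' are m × m integer matrices with det U = 1 and det U' = 1 such that U · X = D and U' · X = D. Then there exists a k × k integer matrix M with det M = 1 such that for every i < k, the i-th row of U equals the M-linear combination of the first k rows of U': U_{i,p} = Σ_{j<k} M_{i,j} · U'_{j,p} for all p < m. In other words, the ℤ-bases for the cohomology group obtained from the zero rows of D after applying the change-of-basis matrices U and U' respectively are related by a transition matrix of determinant 1, hence are equivalent. -/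

import Mathlib

/-!
The transition matrix `W = U * U'⁻¹` has determinant `1` and satisfies `W * D = D`. Column `t`
of `D` is `d t` times the basis vector `e (k + t)` with `d t ≠ 0`, so `W` fixes every
`e (k + t)`: its last `l` columns are those of the identity. Hence `W` is block lower
triangular with identity lower-right block, its upper-left `k × k` block `M` has
`det M = det W = 1`, and the first `k` rows of `U = W * U'` are the `M`-combinations of the
first `k` rows of `U'`.
-/

namespace Matrix

theorem apply_eq_one_apply_of_mul_eq_self {m n R : Type*} [Fintype m] [DecidableEq m]
    [Semiring R] [IsRightCancelMulZero R]
    {W : Matrix m m R} {D : Matrix m n R} (hWD : W * D = D) {r : m} {j : n}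
    (hpivot : D r j ≠ 0) (hcol : ∀ q, q ≠ r → D q j = 0) (i : m) :
    W i r = (1 : Matrix m m R) i r := by
  have hmul (A : Matrix m m R) : (A * D) i j = A i r * D r j := by
    rw [mul_apply]
    exact Finset.sum_eq_single_of_mem r (Finset.mem_univ r)
      fun q _ hq => by rw [hcol q hq, mul_zero]
  refine mul_right_cancel₀ hpivot ?_
  rw [← hmul, ← hmul, hWD, Matrix.one_mul]

theorem det_toBlocks₁₁_of_inr_cols_eq_one {m n R : Type*} [Fintype m] [Fintype n]
    [DecidableEq m] [DecidableEq n] [CommRing R] {W : Matrix (m ⊕ n) (m ⊕ n) R}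
    (hcols : ∀ i j, W i (Sum.inr j) = (1 : Matrix (m ⊕ n) (m ⊕ n) R) i (Sum.inr j)) :
    W.toBlocks₁₁.det = W.det := by
  have hblocks : W = fromBlocks W.toBlocks₁₁ 0 W.toBlocks₂₁ 1 := by
    conv_lhs => rw [← fromBlocks_toBlocks W]
    congr <;> ext i j <;> simp [toBlocks₁₂, toBlocks₂₂, hcols, one_apply]
  conv_rhs => rw [hblocks, det_fromBlocks_zero₁₂, det_one, mul_one]

theorem det_submatrix_castAdd_of_natAdd_cols_eq_one {R : Type*} [CommRing R] {k l : ℕ}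
    {W : Matrix (Fin (k + l)) (Fin (k + l)) R}
    (hcols : ∀ i t, W i (Fin.natAdd k t) = (1 : Matrix _ _ R) i (Fin.natAdd k t)) :
    (W.submatrix (Fin.castAdd l) (Fin.castAdd l)).det = W.det := by
  rw [← det_reindex_self finSumFinEquiv.symm W, ← det_toBlocks₁₁_of_inr_cols_eq_one]
  · rfl
  · intro i t
    rw [← submatrix_one_equiv finSumFinEquiv]
    exact hcols (finSumFinEquiv i) t

theorem mul_apply_eq_sum_castAdd {m o R : Type*} [NonUnitalNonAssocSemiring R] {k l : ℕ}
    (W : Matrix m (Fin (k + l)) R) (V : Matrix (Fin (k + l)) o R) {i : m}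
    (hi : ∀ t, W i (Fin.natAdd k t) = 0) (p : o) :
    (W * V) i p = ∑ j : Fin k, W i (Fin.castAdd l j) * V (Fin.castAdd l j) p := by
  simp [mul_apply, Fin.sum_univ_add, hi]

end Matrix

/-- If `U * X = D = U' * X` where `D` is in Smith-normal-form shape (first `k` rows zero,
then nonzero invariant factors on a shifted diagonal) and `det U = det U' = 1`, then the
first `k` rows of `U` and of `U'` are related by a `k × k` integer matrix of determinant `1`:
the two induced bases for the cohomology group are equivalent. -/
theorem smith_bases_equivalent (k l n : ℕ) (hl : l ≤ n)
    (d : Fin l → ℤ) (hd : ∀ t, d t ≠ 0)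
    (X D : Matrix (Fin (k + l)) (Fin n) ℤ)
    (hD1 : ∀ t : Fin l,
      D ⟨k + t, Nat.add_lt_add_left t.isLt k⟩ ⟨t, lt_of_lt_of_le t.isLt hl⟩ = d t)
    (hD0 : ∀ (i : Fin (k + l)) (j : Fin n),
      ¬((i : ℕ) = k + (j : ℕ) ∧ (j : ℕ) < l) → D i j = 0)
    (U U' : Matrix (Fin (k + l)) (Fin (k + l)) ℤ)
    (hU : U.det = 1) (hU' : U'.det = 1)
    (hUX : U * X = D) (hU'X : U' * X = D) :
    ∃ M : Matrix (Fin k) (Fin k) ℤ, M.det = 1 ∧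
      ∀ (i : Fin k) (p : Fin (k + l)),
        U (Fin.castAdd l i) p = ∑ j : Fin k, M i j * U' (Fin.castAdd l j) p := by
  set W := U * U'⁻¹
  have hWU' : W * U' = U := by
    rw [Matrix.mul_assoc, Matrix.nonsing_inv_mul U' (hU' ▸ isUnit_one), Matrix.mul_one]
  have hWD : W * D = D := by rw [← hU'X, ← Matrix.mul_assoc, hWU', hUX, hU'X]
  have hdetW : W.det = 1 := by
    simpa [hU, hU'] using congrArg Matrix.det hWU'
  have hcols (i : Fin (k + l)) (t : Fin l) :
      W i (Fin.natAdd k t) = (1 : Matrix _ _ ℤ) i (Fin.natAdd k t) :=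
    Matrix.apply_eq_one_apply_of_mul_eq_self hWD ((hD1 t).trans_ne (hd t))
      (fun q hq => hD0 q _ fun h => hq (Fin.ext h.1)) i
  refine ⟨W.submatrix (Fin.castAdd l) (Fin.castAdd l), ?_, fun i p => ?_⟩
  · rw [Matrix.det_submatrix_castAdd_of_natAdd_cols_eq_one hcols, hdetW]
  · rw [← hWU', Matrix.mul_apply_eq_sum_castAdd]
    · rfl
    · intro t
      rw [hcols, Matrix.one_apply_ne]
      exact Fin.ne_of_lt <| Fin.lt_def.mpr <|
        (Fin.castAdd_lt _ _).trans_le (Nat.le_add_right k t)
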